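/- Let G be a Tanner graph with a rooted tree decomposition, and let t be a join node with children t1 and t2 (B_t = B_{t1} = B_{t2}). Suppose S_{t1} is a trapping set with extended parameters (I_{t1},Q,d_{t1}) in G_{t1} and S_{t2} is a trapping set with extended parameters (I_{t2},Q,d_{t2}) in G_{t2}. Then the sets Γ_o(G_{t1}[S_{t1}]) \ B_t^c and Γ_o(G_{t2}[S_{t2}]) \ B_t^c are disjoint, and S_{t1} ∪ S_{t2} is a trapping set with extended parameters (I_{t1} ⊕ I_{t2} ⊕ Γ_o(G_t[Q ∪ B_t^c]), Q, d_{t1} + d_{t2}) in G_t. -/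

import Mathlib

/-- A Tanner graph: a bipartite graph on vertex set `V` partitioned into
variable nodes `L` and check nodes `R`, every edge joining `L` and `R`. -/
structure TannerGraph (V : Type*) where
  G : SimpleGraph V
  L : Set V
  R : Set V
  disj : Disjoint L R
  cover : L ∪ R = Set.univ
  bipartite : ∀ ⦃u v⦄, G.Adj u v → (u ∈ L ∧ v ∈ R) ∨ (u ∈ R ∧ v ∈ L)

/-- `Γ_o(G[S])`: check nodes having an odd number of neighbours in `S`. -/
def TannerGraph.Gamma {V : Type*} (TG : TannerGraph V) (S : Set V) : Set V :=
  {c | c ∈ TG.R ∧ Odd ((TG.G.neighborSet c ∩ S).ncard)}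

/-- A rooted tree decomposition of the graph `G`: `T` is a finite tree with
root `root` and bags `B i ⊆ V` covering all vertices and edges, such that for
every vertex the set of bags containing it induces a connected subgraph of `T`. -/
structure IsRootedTreeDecomp {V ι : Type*} (G : SimpleGraph V)
    (T : SimpleGraph ι) (root : ι) (B : ι → Set V) : Prop where
  isTree : T.IsTree
  covers : ∀ v, ∃ i, v ∈ B i
  coversEdge : ∀ ⦃u v⦄, G.Adj u v → ∃ i, u ∈ B i ∧ v ∈ B i
  connBags : ∀ v, (T.induce {i | v ∈ B i}).Connected

/-- `Desc T root t i`: `i` is a descendant of `t` in the tree `T` rooted at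
`root`, i.e. `t` lies on a path from the root to `i` (`t` itself included). -/
def Desc {ι : Type*} (T : SimpleGraph ι) (root : ι) (t i : ι) : Prop :=
  ∃ p : T.Walk root i, p.IsPath ∧ t ∈ p.support

/-- `IsChildOf T root s t`: `s` is a child of `t` in the rooted tree. -/
def IsChildOf {ι : Type*} (T : SimpleGraph ι) (root : ι) (s t : ι) : Prop :=
  T.Adj t s ∧ Desc T root t s

/-- `∪_{i ∈ T_t} B_i`: union of the bags over all descendants of `t`;
this is the vertex set of the induced subgraph `G_t`. -/
def subVerts {V ι : Type*} (T : SimpleGraph ι) (root : ι) (B : ι → Set V)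
    (t : ι) : Set V :=
  {v | ∃ i, Desc T root t i ∧ v ∈ B i}

/-- `Γ_o(G_t[S])`, where `W` is the vertex set of `G_t`: check nodes of `G_t`
having an odd number of `G_t`-neighbours in `S`. -/
def GammaLoc {V : Type*} (TG : TannerGraph V) (W S : Set V) : Set V :=
  {c | c ∈ TG.R ∧ c ∈ W ∧ Odd ((TG.G.neighborSet c ∩ W ∩ S).ncard)}

/-- `S` is a trapping set with parameters `(R', Q)` in `G_t`, where `W` is the
vertex set of `G_t` and `Bt` is the bag at `t`. -/
def HasParams {V : Type*} (TG : TannerGraph V) (W Bt S R' Q : Set V) : Prop :=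
  S.Nonempty ∧ S ⊆ W ∩ TG.L ∧ S ∩ (Bt ∩ TG.L) = Q ∧ GammaLoc TG W S = R'

/-- `S` is a trapping set with extended parameters `(I, Q, d)` in `G_t`. -/
def HasExtParams {V : Type*} (TG : TannerGraph V) (W Bt S I Q : Set V)
    (d : ℕ) : Prop :=
  S.Nonempty ∧ S ⊆ W ∩ TG.L ∧ S ∩ (Bt ∩ TG.L) = Q ∧
    GammaLoc TG W S ∩ (Bt ∩ TG.R) = I ∧ (GammaLoc TG W S \ (Bt ∩ TG.R)).ncard = d

/-- `Γ_o(G_t[Q ∪ B_t^c]) = {c ∈ B_t^c : |N_{G_t}(c) ∩ Q| is odd}`. -/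
def GammaBag {V : Type*} (TG : TannerGraph V) (W Bt Q : Set V) : Set V :=
  {c | c ∈ Bt ∩ TG.R ∧ Odd ((TG.G.neighborSet c ∩ W ∩ Q).ncard)}

/-!
Since `t` is a join node, the bag `X = B_t` separates `G_t`: the vertex sets `W₁`, `W₂` of
`G_{t₁}`, `G_{t₂}` cover that of `G_t` and meet exactly in `X`, and a node of `W_k` outside `X`
has all its neighbours in `W_k`. The latter holds because the bags containing a vertex form a
subtree: if it meets `T_{t_k}` but misses `t_k`, it lies inside `T_{t_k}`.

Consequently `S₁ ∩ S₂ = Q`, and a check node outside `X` sees `S₁ ∪ S₂` exactly as it sees the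
`S_k` of its own side; this gives the disjointness and the count `d₁ + d₂`. For a check node `c`
in `X`, inclusion–exclusion `|N(c) ∩ (S₁ ∪ S₂)| + |N(c) ∩ Q| = |N(c) ∩ S₁| + |N(c) ∩ S₂|` gives
the parity rule `I₁ ⊕ I₂ ⊕ Γ_o(Q)`.
-/

open SimpleGraph Set

theorem SimpleGraph.Walk.IsPath.eq_of_mem_support_takeUntil_of_mem_support_dropUntil
    {V : Type*} [DecidableEq V] {G : SimpleGraph V} {u v w x : V} {p : G.Walk u v}
    (hp : p.IsPath) (hw : w ∈ p.support) (hx₁ : x ∈ (p.takeUntil w hw).support)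
    (hx₂ : x ∈ (p.dropUntil w hw).support) : x = w := by
  have hnodup := hp.support_nodup
  rw [← p.take_spec hw, Walk.support_append, List.nodup_append] at hnodup
  rw [← Walk.cons_tail_support, List.mem_cons] at hx₂
  exact hx₂.resolve_right fun h => hnodup.2.2 x hx₁ x h rfl

theorem SimpleGraph.IsTree.eq_toWalk_of_isPath {V : Type*} {G : SimpleGraph V} (hG : G.IsTree)
    {u v : V} (h : G.Adj u v) {p : G.Walk u v} (hp : p.IsPath) : p = h.toWalk :=
  (hG.existsUnique_path u v).unique hp (Walk.IsPath.of_adj h)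

theorem exists_walk_of_connected_induce {ι : Type*} {T : SimpleGraph ι} {S : Set ι}
    (h : (T.induce S).Connected) {i j : ι} (hi : i ∈ S) (hj : j ∈ S) :
    ∃ w : T.Walk i j, ∀ x ∈ w.support, x ∈ S := by
  obtain ⟨w⟩ := h.preconnected ⟨i, hi⟩ ⟨j, hj⟩
  have hw : ∀ x ∈ (w.map (Embedding.induce S).toHom).support, x ∈ S := by
    intro x hx
    rw [Walk.support_map, List.mem_map] at hx
    obtain ⟨⟨y, hy⟩, -, rfl⟩ := hx
    exact hy
  exact ⟨_, hw⟩

section RootedTree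

variable {ι : Type*} {T : SimpleGraph ι} {root : ι}

theorem Desc.mem_support (hT : T.IsTree) {t i : ι} (h : Desc T root t i) {p : T.Walk root i}
    (hp : p.IsPath) : t ∈ p.support := by
  obtain ⟨q, hq, ht⟩ := h
  rwa [(hT.existsUnique_path root i).unique hp hq]

theorem desc_refl (hT : T.IsTree) (t : ι) : Desc T root t t := by
  obtain ⟨p, hp⟩ := (hT.existsUnique_path root t).exists
  exact ⟨p, hp, p.end_mem_support⟩

theorem Desc.trans (hT : T.IsTree) {t s i : ι} (hts : Desc T root t s)
    (hsi : Desc T root s i) : Desc T root t i := by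
  classical
  obtain ⟨p, hp, hs⟩ := hsi
  exact ⟨p, hp, p.support_takeUntil_subset_support hs (hts.mem_support hT (hp.takeUntil hs))⟩

theorem Desc.of_adj (hT : T.IsTree) {t i s : ι} (hd : Desc T root t i) (hadj : T.Adj i s)
    (hti : t ≠ i) (hts : t ≠ s) : Desc T root t s := by
  classical
  obtain ⟨p, hp, ht⟩ := hd
  by_cases hs : s ∈ p.support
  · refine ⟨p.takeUntil s hs, hp.takeUntil hs, ?_⟩
    -- the rest of `p` after `s` is the path from `s` to its neighbour `i`, the single edge
    rw [← p.take_spec hs, Walk.mem_support_append_iff,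
      hT.eq_toWalk_of_isPath hadj.symm (hp.dropUntil hs), Adj.support_toWalk] at ht
    simpa [hts, hti] using ht
  · refine ⟨p.concat hadj, hp.concat hs hadj, ?_⟩
    rw [Walk.support_concat]
    exact List.mem_append_left _ ht

theorem Desc.of_walk (hT : T.IsTree) {t i j : ι} (hd : Desc T root t i) (w : T.Walk i j)
    (ht : t ∉ w.support) : Desc T root t j := by
  induction w with
  | nil => exact hd
  | cons hadj q ih =>
    rw [Walk.support_cons, List.mem_cons, not_or] at ht
    exact ih (hd.of_adj hT hadj ht.1 fun h => ht.2 (h ▸ q.start_mem_support)) ht.2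

theorem Desc.exists_isPath_notMem_support (hT : T.IsTree) {t s j : ι} (hts : Desc T root t s)
    (hne : t ≠ s) (hsj : Desc T root s j) : ∃ r : T.Walk s j, r.IsPath ∧ t ∉ r.support := by
  classical
  obtain ⟨p, hp, hs⟩ := hsj
  exact ⟨p.dropUntil s hs, hp.dropUntil hs, fun ht => hne
    (hp.eq_of_mem_support_takeUntil_of_mem_support_dropUntil hs
      (hts.mem_support hT (hp.takeUntil hs)) ht)⟩

theorem IsChildOf.eq_of_desc (hT : T.IsTree) {t t₁ t₂ j : ι} (hc₁ : IsChildOf T root t₁ t)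
    (hc₂ : IsChildOf T root t₂ t) (hd₁ : Desc T root t₁ j) (hd₂ : Desc T root t₂ j) :
    t₁ = t₂ := by
  obtain ⟨r₁, hr₁, ht₁⟩ := hc₁.2.exists_isPath_notMem_support hT hc₁.1.ne hd₁
  obtain ⟨r₂, hr₂, ht₂⟩ := hc₂.2.exists_isPath_notMem_support hT hc₂.1.ne hd₂
  -- both extend to the unique path from `t` to `j`, whose second vertex is then `t₁` and `t₂`
  have h := congrArg Walk.snd ((hT.existsUnique_path t j).unique
    (hr₁.cons ht₁ (h := hc₁.1)) (hr₂.cons ht₂ (h := hc₂.1)))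
  simpa using h

theorem Desc.exists_isChildOf {t i : ι} (hd : Desc T root t i) (hne : t ≠ i) :
    ∃ s, IsChildOf T root s t ∧ Desc T root s i := by
  classical
  obtain ⟨p, hp, ht⟩ := hd
  have hq : ¬ (p.dropUntil t ht).Nil := Walk.not_nil_of_ne hne
  set s := (p.dropUntil t ht).snd
  have hadj : T.Adj t s := Walk.adj_snd hq
  have hs : s ∈ (p.dropUntil t ht).support := List.mem_of_mem_tail (Walk.snd_mem_tail_support hq)
  have hsp : s ∉ (p.takeUntil t ht).support := fun h =>
    hadj.ne (hp.eq_of_mem_support_takeUntil_of_mem_support_dropUntil ht h hs).symm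
  refine ⟨s, ⟨hadj, (p.takeUntil t ht).concat hadj, (hp.takeUntil ht).concat hsp hadj, ?_⟩,
    p, hp, p.support_dropUntil_subset_support ht hs⟩
  rw [Walk.support_concat]
  exact List.mem_append_left _ (Walk.end_mem_support _)

end RootedTree

structure IsSeparation {V : Type*} (G : SimpleGraph V) (W₁ W₂ X : Set V) : Prop where
  inter_eq : W₁ ∩ W₂ = X
  mem_left_of_adj : ∀ ⦃c v⦄, c ∈ W₁ → c ∉ X → G.Adj c v → v ∈ W₁
  mem_right_of_adj : ∀ ⦃c v⦄, c ∈ W₂ → c ∉ X → G.Adj c v → v ∈ W₂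

theorem IsSeparation.symm {V : Type*} {G : SimpleGraph V} {W₁ W₂ X : Set V}
    (h : IsSeparation G W₁ W₂ X) : IsSeparation G W₂ W₁ X :=
  ⟨by rw [inter_comm, h.inter_eq], h.mem_right_of_adj, h.mem_left_of_adj⟩

theorem IsSeparation.neighborSet_inter_union_eq_left {V : Type*} {G : SimpleGraph V}
    {W₁ W₂ X S₁ S₂ : Set V} (hsep : IsSeparation G W₁ W₂ X) (hS₂ : S₂ ⊆ W₂)
    (hX : S₂ ∩ X ⊆ S₁) {c : V} (hc : c ∈ W₁) (hcX : c ∉ X) :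
    G.neighborSet c ∩ (S₁ ∪ S₂) = G.neighborSet c ∩ S₁ := by
  refine subset_antisymm ?_ (inter_subset_inter_right _ subset_union_left)
  rintro v ⟨hv, hv₁ | hv₂⟩
  · exact ⟨hv, hv₁⟩
  · refine ⟨hv, hX ⟨hv₂, ?_⟩⟩
    rw [← hsep.inter_eq]
    exact ⟨hsep.mem_left_of_adj hc hcX hv, hS₂ hv₂⟩

theorem inter_eq_of_inter_eq_of_inter_subset {V : Type*} {W₁ W₂ X S₁ S₂ Q : Set V}
    (hW : W₁ ∩ W₂ ⊆ X) (hS₁ : S₁ ⊆ W₁) (hS₂ : S₂ ⊆ W₂) (hQ₁ : S₁ ∩ X = Q)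
    (hQ₂ : S₂ ∩ X = Q) : S₁ ∩ S₂ = Q := by
  refine subset_antisymm (fun v hv => ?_) (subset_inter ?_ ?_)
  · rw [← hQ₁]
    exact ⟨hv.1, hW ⟨hS₁ hv.1, hS₂ hv.2⟩⟩
  · rw [← hQ₁]; exact inter_subset_left
  · rw [← hQ₂]; exact inter_subset_left

namespace IsRootedTreeDecomp

variable {V ι : Type*} {G : SimpleGraph V} {T : SimpleGraph ι} {root : ι} {B : ι → Set V}

theorem bag_subset_subVerts (hD : IsRootedTreeDecomp G T root B) (t : ι) :
    B t ⊆ subVerts T root B t :=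
  fun _ hv => ⟨t, desc_refl hD.isTree t, hv⟩

theorem subVerts_subset_of_desc (hD : IsRootedTreeDecomp G T root B) {t s : ι}
    (h : Desc T root t s) : subVerts T root B s ⊆ subVerts T root B t :=
  fun _ ⟨i, hi, hv⟩ => ⟨i, h.trans hD.isTree hi, hv⟩

theorem desc_of_mem_bag (hD : IsRootedTreeDecomp G T root B) {s j : ι} {v : V}
    (hv : v ∈ subVerts T root B s) (hvs : v ∉ B s) (hj : v ∈ B j) : Desc T root s j := by
  obtain ⟨i, hi, hvi⟩ := hv
  obtain ⟨w, hw⟩ := exists_walk_of_connected_induce (hD.connBags v) hvi hj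
  exact hi.of_walk hD.isTree w fun hs => hvs (hw s hs)

theorem mem_subVerts_of_adj (hD : IsRootedTreeDecomp G T root B) {s : ι} {c v : V}
    (hc : c ∈ subVerts T root B s) (hcs : c ∉ B s) (hadj : G.Adj c v) :
    v ∈ subVerts T root B s := by
  obtain ⟨k, hck, hvk⟩ := hD.coversEdge hadj
  exact ⟨k, hD.desc_of_mem_bag hc hcs hck, hvk⟩

theorem subVerts_inter_subVerts_subset_bag (hD : IsRootedTreeDecomp G T root B)
    {t t₁ t₂ : ι} (hc₁ : IsChildOf T root t₁ t) (hc₂ : IsChildOf T root t₂ t) (hne : t₁ ≠ t₂) :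
    subVerts T root B t₁ ∩ subVerts T root B t₂ ⊆ B t₁ := by
  rintro v ⟨hv₁, j, hj, hvj⟩
  by_contra hv
  exact hne (hc₁.eq_of_desc hD.isTree hc₂ (hD.desc_of_mem_bag hv₁ hv hvj) hj)

theorem subVerts_eq_union (hD : IsRootedTreeDecomp G T root B) {t t₁ t₂ : ι}
    (hc₁ : IsChildOf T root t₁ t) (hc₂ : IsChildOf T root t₂ t)
    (honly : ∀ s, IsChildOf T root s t → s = t₁ ∨ s = t₂) (hB₁ : B t = B t₁) :
    subVerts T root B t = subVerts T root B t₁ ∪ subVerts T root B t₂ := by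
  refine subset_antisymm ?_
    (union_subset (hD.subVerts_subset_of_desc hc₁.2) (hD.subVerts_subset_of_desc hc₂.2))
  rintro v ⟨i, hi, hvi⟩
  rcases eq_or_ne t i with rfl | hti
  · exact Or.inl (hD.bag_subset_subVerts t₁ (hB₁ ▸ hvi))
  · obtain ⟨s, hs, hsi⟩ := hi.exists_isChildOf hti
    rcases honly s hs with rfl | rfl
    exacts [Or.inl ⟨i, hsi, hvi⟩, Or.inr ⟨i, hsi, hvi⟩]

theorem isSeparation_subVerts (hD : IsRootedTreeDecomp G T root B) {t t₁ t₂ : ι}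
    (hc₁ : IsChildOf T root t₁ t) (hc₂ : IsChildOf T root t₂ t) (hne : t₁ ≠ t₂)
    (hB₁ : B t = B t₁) (hB₂ : B t = B t₂) :
    IsSeparation G (subVerts T root B t₁) (subVerts T root B t₂) (B t) where
  inter_eq := by
    refine subset_antisymm ?_ (subset_inter ?_ ?_)
    · rw [hB₁]; exact hD.subVerts_inter_subVerts_subset_bag hc₁ hc₂ hne
    · rw [hB₁]; exact hD.bag_subset_subVerts t₁
    · rw [hB₂]; exact hD.bag_subset_subVerts t₂
  mem_left_of_adj _ _ hc hcX := hD.mem_subVerts_of_adj hc (hB₁ ▸ hcX)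
  mem_right_of_adj _ _ hc hcX := hD.mem_subVerts_of_adj hc (hB₂ ▸ hcX)

end IsRootedTreeDecomp

namespace TannerGraph

variable {V : Type*} (TG : TannerGraph V)

theorem gamma_union [Finite V] (S₁ S₂ : Set V) :
    TG.Gamma (S₁ ∪ S₂) =
      symmDiff (symmDiff (TG.Gamma S₁) (TG.Gamma S₂)) (TG.Gamma (S₁ ∩ S₂)) := by
  ext c
  have h := ncard_union_add_ncard_inter (TG.G.neighborSet c ∩ S₁) (TG.G.neighborSet c ∩ S₂)
    (toFinite _) (toFinite _)
  rw [← inter_union_distrib_left, ← inter_inter_distrib_left] at h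
  simp only [Gamma, mem_symmDiff, mem_ofPred_eq, Nat.odd_iff]
  by_cases hc : c ∈ TG.R <;> simp only [hc, true_and, false_and, not_false_eq_true, and_true,
    or_self]
  omega

theorem gammaLoc_eq_inter_gamma {W S : Set V} (hS : S ⊆ W) :
    GammaLoc TG W S = W ∩ TG.Gamma S := by
  ext c
  simp only [GammaLoc, Gamma, mem_ofPred_eq, mem_inter_iff, inter_assoc, inter_eq_right.mpr hS]
  tauto

theorem gammaBag_eq_inter_gamma {W X Q : Set V} (hQ : Q ⊆ W) :
    GammaBag TG W X Q = X ∩ TG.Gamma Q := by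
  ext c
  simp only [GammaBag, Gamma, mem_ofPred_eq, mem_inter_iff, inter_assoc, inter_eq_right.mpr hQ]
  tauto

theorem gammaLoc_inter_bag {W X S : Set V} (hS : S ⊆ W) (hX : X ⊆ W) :
    GammaLoc TG W S ∩ (X ∩ TG.R) = X ∩ TG.Gamma S := by
  ext c
  have hR : c ∈ TG.Gamma S → c ∈ TG.R := And.left
  have hW : c ∈ X → c ∈ W := (hX ·)
  simp only [TG.gammaLoc_eq_inter_gamma hS, mem_inter_iff]
  tauto

theorem gammaLoc_diff_bag {W X S : Set V} (hS : S ⊆ W) :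
    GammaLoc TG W S \ (X ∩ TG.R) = (W \ X) ∩ TG.Gamma S := by
  ext c
  have hR : c ∈ TG.Gamma S → c ∈ TG.R := And.left
  simp only [TG.gammaLoc_eq_inter_gamma hS, mem_sdiff, mem_inter_iff]
  tauto

theorem disjoint_gammaLoc_diff_bag {W₁ W₂ X S₁ S₂ : Set V} (hW : W₁ ∩ W₂ ⊆ X) :
    Disjoint (GammaLoc TG W₁ S₁ \ (X ∩ TG.R)) (GammaLoc TG W₂ S₂ \ (X ∩ TG.R)) := by
  rw [Set.disjoint_left]
  rintro c ⟨hc₁, hcX⟩ ⟨hc₂, -⟩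
  exact hcX ⟨hW ⟨hc₁.2.1, hc₂.2.1⟩, hc₁.1⟩

theorem diff_inter_gamma_union_left {W₁ W₂ X S₁ S₂ : Set V}
    (hsep : IsSeparation TG.G W₁ W₂ X) (hS₂ : S₂ ⊆ W₂) (hX : S₂ ∩ X ⊆ S₁) :
    (W₁ \ X) ∩ TG.Gamma (S₁ ∪ S₂) = (W₁ \ X) ∩ TG.Gamma S₁ := by
  ext c
  refine and_congr_right fun ⟨hc, hcX⟩ => ?_
  simp only [Gamma, mem_ofPred_eq, hsep.neighborSet_inter_union_eq_left hS₂ hX hc hcX]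

theorem gammaLoc_union_diff_bag {W₁ W₂ X S₁ S₂ : Set V} (hsep : IsSeparation TG.G W₁ W₂ X)
    (hS₁ : S₁ ⊆ W₁) (hS₂ : S₂ ⊆ W₂) (hX₁ : S₁ ∩ X ⊆ S₂) (hX₂ : S₂ ∩ X ⊆ S₁) :
    GammaLoc TG (W₁ ∪ W₂) (S₁ ∪ S₂) \ (X ∩ TG.R) =
      (GammaLoc TG W₁ S₁ \ (X ∩ TG.R)) ∪ (GammaLoc TG W₂ S₂ \ (X ∩ TG.R)) := by
  rw [TG.gammaLoc_diff_bag (union_subset_union hS₁ hS₂), TG.gammaLoc_diff_bag hS₁,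
    TG.gammaLoc_diff_bag hS₂, union_sdiff_distrib, union_inter_distrib_right,
    TG.diff_inter_gamma_union_left hsep hS₂ hX₂, union_comm S₁,
    TG.diff_inter_gamma_union_left hsep.symm hS₁ hX₁]

end TannerGraph

theorem HasExtParams.inter_bag_eq {V : Type*} {TG : TannerGraph V} {W X S I Q : Set V} {d : ℕ}
    (h : HasExtParams TG W X S I Q d) : S ∩ X = Q := by
  rw [← h.2.2.1, inter_comm X, ← inter_assoc, inter_eq_left.mpr fun v hv => (h.2.1 hv).2]

theorem HasExtParams.union {V : Type*} [Finite V] {TG : TannerGraph V}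
    {W₁ W₂ X S₁ S₂ I₁ I₂ Q : Set V} {d₁ d₂ : ℕ} (hsep : IsSeparation TG.G W₁ W₂ X)
    (h₁ : HasExtParams TG W₁ X S₁ I₁ Q d₁) (h₂ : HasExtParams TG W₂ X S₂ I₂ Q d₂) :
    HasExtParams TG (W₁ ∪ W₂) X (S₁ ∪ S₂)
      (symmDiff (symmDiff I₁ I₂) (GammaBag TG (W₁ ∪ W₂) X Q)) Q (d₁ + d₂) := by
  have hQ₁ := h₁.inter_bag_eq
  have hQ₂ := h₂.inter_bag_eq
  obtain ⟨hne₁, hS₁, hL₁, rfl, rfl⟩ := h₁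
  obtain ⟨-, hS₂, hL₂, rfl, rfl⟩ := h₂
  have hSW₁ : S₁ ⊆ W₁ := fun v hv => (hS₁ hv).1
  have hSW₂ : S₂ ⊆ W₂ := fun v hv => (hS₂ hv).1
  have hXW₁ : X ⊆ W₁ := hsep.inter_eq ▸ inter_subset_left
  have hXW₂ : X ⊆ W₂ := hsep.inter_eq ▸ inter_subset_right
  have hQ : S₁ ∩ S₂ = Q :=
    inter_eq_of_inter_eq_of_inter_subset hsep.inter_eq.le hSW₁ hSW₂ hQ₁ hQ₂
  have hQW : Q ⊆ W₁ ∪ W₂ := hQ₁ ▸ inter_subset_right.trans (hXW₁.trans subset_union_left)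
  refine ⟨hne₁.mono subset_union_left, union_subset
    (hS₁.trans (inter_subset_inter_left _ subset_union_left))
    (hS₂.trans (inter_subset_inter_left _ subset_union_right)),
    by rw [union_inter_distrib_right, hL₁, hL₂, union_self], ?_, ?_⟩
  · rw [TG.gammaLoc_inter_bag (union_subset_union hSW₁ hSW₂) (hXW₁.trans subset_union_left),
      TG.gammaLoc_inter_bag hSW₁ hXW₁, TG.gammaLoc_inter_bag hSW₂ hXW₂,
      TG.gammaBag_eq_inter_gamma hQW, TG.gamma_union, hQ, inter_symmDiff_distrib_left,
      inter_symmDiff_distrib_left]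
  · rw [TG.gammaLoc_union_diff_bag hsep hSW₁ hSW₂ (by rw [hQ₁, ← hQ₂]; exact inter_subset_left)
      (by rw [hQ₂, ← hQ₁]; exact inter_subset_left),
      ncard_union_eq (TG.disjoint_gammaLoc_diff_bag hsep.inter_eq.le) (toFinite _) (toFinite _)]

theorem stmt_8_general {V ι : Type*} [Fintype V]
    (TG : TannerGraph V) (T : SimpleGraph ι) (root : ι) (B : ι → Set V)
    (hD : IsRootedTreeDecomp TG.G T root B)
    (t t1 t2 : ι)
    (hc1 : IsChildOf T root t1 t) (hc2 : IsChildOf T root t2 t) (hne : t1 ≠ t2)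
    (honly : ∀ s, IsChildOf T root s t → s = t1 ∨ s = t2)
    (hB1 : B t = B t1) (hB2 : B t = B t2)
    (S1 S2 I1 I2 Q : Set V) (d1 d2 : ℕ)
    (h1 : HasExtParams TG (subVerts T root B t1) (B t1) S1 I1 Q d1)
    (h2 : HasExtParams TG (subVerts T root B t2) (B t2) S2 I2 Q d2) :
    Disjoint (GammaLoc TG (subVerts T root B t1) S1 \ (B t ∩ TG.R))
      (GammaLoc TG (subVerts T root B t2) S2 \ (B t ∩ TG.R)) ∧
    HasExtParams TG (subVerts T root B t) (B t) (S1 ∪ S2)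
      (symmDiff (symmDiff I1 I2) (GammaBag TG (subVerts T root B t) (B t) Q))
      Q (d1 + d2) := by
  have hsep := hD.isSeparation_subVerts hc1 hc2 hne hB1 hB2
  rw [← hB1] at h1
  rw [← hB2] at h2
  rw [hD.subVerts_eq_union hc1 hc2 honly hB1]
  exact ⟨TG.disjoint_gammaLoc_diff_bag hsep.inter_eq.le, h1.union hsep h2⟩

/-- join-node combination rule for extended parameters, together
with the disjointness of the parts of the odd-degree sets outside `B_t^c`. -/
theorem stmt_8 {V ι : Type*} [Fintype V] [Fintype ι]
    (TG : TannerGraph V) (T : SimpleGraph ι) (root : ι) (B : ι → Set V)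
    (hD : IsRootedTreeDecomp TG.G T root B)
    (t t1 t2 : ι)
    (hc1 : IsChildOf T root t1 t) (hc2 : IsChildOf T root t2 t) (hne : t1 ≠ t2)
    (honly : ∀ s, IsChildOf T root s t → s = t1 ∨ s = t2)
    (hB1 : B t = B t1) (hB2 : B t = B t2)
    (S1 S2 I1 I2 Q : Set V) (d1 d2 : ℕ)
    (h1 : HasExtParams TG (subVerts T root B t1) (B t1) S1 I1 Q d1)
    (h2 : HasExtParams TG (subVerts T root B t2) (B t2) S2 I2 Q d2) :
    Disjoint (GammaLoc TG (subVerts T root B t1) S1 \ (B t ∩ TG.R))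
      (GammaLoc TG (subVerts T root B t2) S2 \ (B t ∩ TG.R)) ∧
    HasExtParams TG (subVerts T root B t) (B t) (S1 ∪ S2)
      (symmDiff (symmDiff I1 I2) (GammaBag TG (subVerts T root B t) (B t) Q))
      Q (d1 + d2) :=
  stmt_8_general TG T root B hD t t1 t2 hc1 hc2 hne honly hB1 hB2 S1 S2 I1 I2 Q d1 d2 h1 h2
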